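/- arXiv:2302.05350 — 8 statements merged into one kernel-verified Lean document; each statement's English description precedes it below -/
import Mathlib

section
/- Let C be a minimal linear code of length n and dimension k over F_q (every nonzero codeword c has the property that no other nonzero codeword has support strictly contained in the support of c). Then every codeword c of C satisfies wt_H(c) ≤ n - k + 1. -/
/-- The support of a vector: the set of coordinates where it is nonzero. -/
def codeSupp {F : Type*} [Zero F] {n : ℕ} (x : Fin n → F) : Set (Fin n) :=
  {i | x i ≠ 0}

/-- A linear code is minimal if no nonzero codeword has its support strictly
containing the support of another nonzero codeword. -/
def IsMinimalCode {F : Type*} [Field F] {n : ℕ} (C : Submodule F (Fin n → F)) : Prop :=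
  ∀ c ∈ C, c ≠ 0 → ∀ c' ∈ C, c' ≠ 0 → ¬ codeSupp c' ⊂ codeSupp c

/-- Every codeword of a minimal `[n,k]` code over a finite field has Hamming
weight at most `n - k + 1`. -/
theorem weight_le_of_minimal {F : Type*} [Field F] [Fintype F] [DecidableEq F]
    {n k : ℕ} (C : Submodule F (Fin n → F))
    (hdim : Module.finrank F C = k) (hmin : IsMinimalCode C) :
    ∀ c ∈ C, hammingNorm c ≤ n - k + 1 := by
  intro c hc
  by_cases hc0 : c = 0
  · simp [hc0]
  -- the restriction map to the coordinates where c vanishes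
  set φ : ↥C →ₗ[F] ({i : Fin n // c i = 0} → F) :=
    (LinearMap.funLeft F F Subtype.val).comp C.subtype with hφ
  have hker : LinearMap.ker φ = Submodule.span F {(⟨c, hc⟩ : ↥C)} := by
    apply le_antisymm
    · intro x hx
      have hx' : ∀ i : Fin n, c i = 0 → (x : Fin n → F) i = 0 := by
        intro i hi
        have := congrFun (LinearMap.mem_ker.mp hx) ⟨i, hi⟩
        simpa [hφ, LinearMap.funLeft] using this
      by_cases hx0 : (x : Fin n → F) = 0
      · have : x = 0 := Subtype.ext hx0
        simp [this]
      · -- supp x ⊆ supp c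
        have hsub : codeSupp (x : Fin n → F) ⊆ codeSupp c := by
          intro i hi
          simp only [codeSupp, Set.mem_setOf_eq] at hi ⊢
          intro h; exact hi (hx' i h)
        obtain ⟨i, hi⟩ : ∃ i, c i ≠ 0 := by
          by_contra h; push_neg at h; exact hc0 (funext h)
        set lam : F := (x : Fin n → F) i / c i with hlam
        have hy : (x : Fin n → F) - lam • c ∈ C := C.sub_mem x.2 (C.smul_mem _ hc)
        have hyi : ((x : Fin n → F) - lam • c) i = 0 := by
          simp [hlam, div_mul_cancel₀ _ hi]
        have hy0 : (x : Fin n → F) - lam • c = 0 := by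
          by_contra hne
          apply hmin c hc hc0 _ hy hne
          constructor
          · intro j hj
            simp only [codeSupp, Set.mem_setOf_eq, Pi.sub_apply, Pi.smul_apply,
              smul_eq_mul] at hj ⊢
            intro h; exact hj (by simp [h, hx' j h])
          · intro hcon
            have := hcon hi
            simp only [codeSupp, Set.mem_setOf_eq] at this
            exact this hyi
        have : (x : Fin n → F) = lam • c := by
          rwa [sub_eq_zero] at hy0
        refine Submodule.mem_span_singleton.mpr ⟨lam, ?_⟩
        exact Subtype.ext this.symm
    · rw [Submodule.span_singleton_le_iff_mem, LinearMap.mem_ker]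
      ext j
      simpa [hφ, LinearMap.funLeft] using j.2
  have hkerdim : Module.finrank F (LinearMap.ker φ) = 1 := by
    rw [hker]
    refine finrank_span_singleton ?_
    intro h
    exact hc0 (congrArg Subtype.val h)
  have hrn := LinearMap.finrank_range_add_finrank_ker φ
  have hrange : Module.finrank F (LinearMap.range φ) ≤ n - hammingNorm c := by
    have h1 : Module.finrank F (LinearMap.range φ) ≤
        Module.finrank F ({i : Fin n // c i = 0} → F) := Submodule.finrank_le _
    have h2 : Module.finrank F ({i : Fin n // c i = 0} → F) =
        Fintype.card {i : Fin n // c i = 0} := Module.finrank_pi F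
    have h3 : Fintype.card {i : Fin n // c i = 0} = n - hammingNorm c := by
      rw [Fintype.card_subtype]
      have := Finset.card_filter_add_card_filter_not
        (s := (Finset.univ : Finset (Fin n))) (p := fun i => c i = 0)
      simp only [Finset.card_univ, Fintype.card_fin] at this
      have hnorm : hammingNorm c = (Finset.univ.filter fun i => ¬ c i = 0).card := rfl
      omega
    omega
  have hw : hammingNorm c ≤ n := (Finset.card_filter_le _ _).trans (by simp)
  omega
end

section
/- Let C be a minimal linear [n,k,d] code over F_q with k ≥ 1. Then d ≥ (q-1)(k-1) + 1. -/
open Finset MvPolynomial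

/-- Affine blocking set bound (Jamison / Brouwer–Schrijver), via Chevalley–Warning. -/
lemma blocking_card {F : Type*} [Field F] [Fintype F] [DecidableEq F]
    {m : ℕ} (hm : 1 ≤ m) (B : Finset (Fin m → F))
    (hB : ∀ a : Fin m → F, a ≠ 0 → ∀ t : F, ∃ b ∈ B, ∑ j, a j * b j = t) :
    m * (Fintype.card F - 1) + 1 ≤ B.card := by
  classical
  have hone : (fun _ : Fin m => (1 : F)) ≠ 0 :=
    Function.ne_iff.mpr ⟨⟨0, hm⟩, one_ne_zero⟩
  obtain ⟨b0, hb0, -⟩ := hB _ hone 0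
  set B1 : Finset (Fin m → F) := B.image (· - b0) with hB1
  have hinj : Function.Injective (· - b0 : (Fin m → F) → (Fin m → F)) :=
    sub_left_injective
  have hcard1 : B1.card = B.card := Finset.card_image_of_injective _ hinj
  have h0mem : (0 : Fin m → F) ∈ B1 := by
    refine Finset.mem_image.mpr ⟨b0, hb0, by simp⟩
  set B' : Finset (Fin m → F) := B1.erase 0 with hB'
  have hcard' : B'.card = B.card - 1 := by
    rw [hB', Finset.card_erase_of_mem h0mem, hcard1]
  have hBpos : 1 ≤ B.card := Finset.card_pos.mpr ⟨b0, hb0⟩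
  suffices h : m * (Fintype.card F - 1) ≤ B'.card by omega
  -- the polynomial
  set P : MvPolynomial (Fin m) F := ∏ b ∈ B', ((∑ j, C (b j) * X j) - 1) with hP
  have heval : ∀ x : Fin m → F, eval x P =
      ∏ b ∈ B', ((∑ j, b j * x j) - 1) := by
    intro x
    rw [hP, map_prod]
    refine Finset.prod_congr rfl fun b _ => ?_
    simp
  have h0 : eval (0 : Fin m → F) P ≠ 0 := by
    rw [heval]
    simp only [Pi.zero_apply, mul_zero, Finset.sum_const_zero, zero_sub]
    rw [Finset.prod_const]
    exact pow_ne_zero _ (neg_ne_zero.mpr one_ne_zero)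
  have hx : ∀ x : Fin m → F, x ≠ 0 → eval x P = 0 := by
    intro x hxne
    obtain ⟨b, hbB, hbsum⟩ := hB x hxne (1 + ∑ j, x j * b0 j)
    have hb'mem1 : b - b0 ∈ B1 := Finset.mem_image.mpr ⟨b, hbB, rfl⟩
    have hsum' : (∑ j, (b - b0) j * x j) = 1 := by
      have : (∑ j, (b - b0) j * x j) = (∑ j, x j * b j) - ∑ j, x j * b0 j := by
        rw [← Finset.sum_sub_distrib]
        refine Finset.sum_congr rfl fun j _ => by simp [sub_mul]; ring
      rw [this, hbsum]; ring
    have hb'ne : b - b0 ≠ 0 := by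
      intro h
      rw [h] at hsum'
      simp at hsum'
    have hb'mem : b - b0 ∈ B' := Finset.mem_erase.mpr ⟨hb'ne, hb'mem1⟩
    rw [heval]
    refine Finset.prod_eq_zero hb'mem ?_
    rw [hsum']; ring
  have hsumP : ∑ x : Fin m → F, eval x P ≠ 0 := by
    rw [Fintype.sum_eq_single (0 : Fin m → F) hx]
    exact h0
  have hdeg_ge : (Fintype.card F - 1) * m ≤ P.totalDegree := by
    by_contra h
    push_neg at h
    refine hsumP (P.sum_eval_eq_zero ?_)
    simpa using h
  have hdeg_le : P.totalDegree ≤ B'.card := by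
    rw [hP]
    refine le_trans (totalDegree_finset_prod _ _) ?_
    have hle : ∀ b ∈ B', ((∑ j, C (b j) * X j) - 1 : MvPolynomial (Fin m) F).totalDegree ≤ 1 := ?_
    · refine le_trans (Finset.sum_le_sum hle) ?_
      simp
    intro b _
    have h1 : ((∑ j, C (b j) * X j : MvPolynomial (Fin m) F)).totalDegree ≤ 1 := by
      refine le_trans (totalDegree_finset_sum _ _) ?_
      refine Finset.sup_le fun j _ => ?_
      refine le_trans (totalDegree_mul _ _) ?_
      simp [totalDegree_C, totalDegree_X]
    calc ((∑ j, C (b j) * X j) - 1 : MvPolynomial (Fin m) F).totalDegree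
        ≤ max (∑ j, C (b j) * X j : MvPolynomial (Fin m) F).totalDegree
            (-1 : MvPolynomial (Fin m) F).totalDegree := by
          rw [sub_eq_add_neg]; exact totalDegree_add _ _
      _ ≤ 1 := by
          simp only [totalDegree_neg, totalDegree_one]
          omega
  calc m * (Fintype.card F - 1) = (Fintype.card F - 1) * m := Nat.mul_comm _ _
    _ ≤ P.totalDegree := hdeg_ge
    _ ≤ B'.card := hdeg_le

/-- If `C` is a minimal `[n,k,d]` code over `F_q` with `k ≥ 1`, then
`d ≥ (q-1)(k-1) + 1`. -/
theorem minDist_ge_of_minimal {F : Type*} [Field F] [Fintype F] [DecidableEq F]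
    {n k d q : ℕ} (hq : Fintype.card F = q) (hk : 1 ≤ k)
    (C : Submodule F (Fin n → F))
    (hdim : Module.finrank F C = k) (hmin : IsMinimalCode C)
    (hd : IsLeast {w | ∃ c ∈ C, c ≠ 0 ∧ hammingNorm c = w} d) :
    (q - 1) * (k - 1) + 1 ≤ d := by
  classical
  obtain ⟨⟨c, hcC, hc0, hcd⟩, -⟩ := hd
  have hd1 : 1 ≤ d := by
    rw [← hcd]
    exact hammingNorm_pos_iff.mpr hc0
  rcases Nat.lt_or_ge k 2 with hk2 | hk2
  · have : k - 1 = 0 := by omega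
    simpa [this] using hd1
  -- k ≥ 2
  set m := k - 1 with hm
  have hm1 : 1 ≤ m := by omega
  -- L1 : any codeword supported within supp c is a multiple of c
  have L1 : ∀ y ∈ C, codeSupp y ⊆ codeSupp c → ∃ t : F, y = t • c := by
    intro y hyC hsub
    by_cases hy0 : y = 0
    · exact ⟨0, by simp [hy0]⟩
    have hnss : ¬ codeSupp y ⊂ codeSupp c := hmin c hcC hc0 y hyC hy0
    have heqsupp : codeSupp y = codeSupp c := by
      by_contra hne
      exact hnss (ssubset_of_subset_of_ne hsub hne)
    obtain ⟨i₀, hi₀⟩ := Function.ne_iff.mp hc0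
    have hci₀ : c i₀ ≠ 0 := by simpa using hi₀
    set t := y i₀ / c i₀ with ht
    set z := y - t • c with hz
    have hzC : z ∈ C := C.sub_mem hyC (C.smul_mem t hcC)
    have hzi₀ : z i₀ = 0 := by
      simp only [hz, Pi.sub_apply, Pi.smul_apply, smul_eq_mul, ht]
      rw [div_mul_cancel₀ _ hci₀]
      ring
    have hzsub : codeSupp z ⊆ codeSupp c := by
      intro i hi
      by_contra hci
      have hci' : c i = 0 := not_not.mp hci
      have hyi : y i = 0 := by
        have : i ∉ codeSupp c := hci
        rw [← heqsupp] at this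
        exact not_not.mp this
      exact hi (by simp [hz, hyi, hci'])
    by_cases hz0 : z = 0
    · exact ⟨t, by rw [← sub_eq_zero]; exact hz0⟩
    · exact absurd (ssubset_of_subset_of_ne hzsub (fun h => by
        have : i₀ ∈ codeSupp z := h ▸ hci₀
        exact this hzi₀)) (hmin c hcC hc0 z hzC hz0)
  -- Claim A
  have claimA : ∀ x ∈ C, (∀ t : F, x ≠ t • c) → ∀ t : F,
      ∃ i, c i ≠ 0 ∧ x i = t * c i := by
    intro x hxC hx t
    by_contra hno
    push_neg at hno
    set y := x - t • c with hy
    have hyC : y ∈ C := C.sub_mem hxC (C.smul_mem t hcC)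
    have hy0 : y ≠ 0 := fun h => hx t (by rwa [← sub_eq_zero])
    have hsup : codeSupp c ⊆ codeSupp y := by
      intro i hi
      have hci : c i ≠ 0 := hi
      show y i ≠ 0
      simp only [hy, Pi.sub_apply, Pi.smul_apply, smul_eq_mul, ne_eq, sub_eq_zero]
      exact hno i hci
    by_cases hsub : codeSupp y ⊆ codeSupp c
    · obtain ⟨s, hs⟩ := L1 y hyC hsub
      refine hx (t + s) ?_
      have : x = y + t • c := by rw [hy]; ring
      rw [this, hs, add_smul]; ring
    · have hss : codeSupp c ⊂ codeSupp y := ⟨hsup, fun h => hsub (fun i hi => h hi)⟩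
      exact hmin y hyC hy0 c hcC hc0 hss
  -- quotient and basis
  have hfd : FiniteDimensional F C := inferInstance
  set cC : C := ⟨c, hcC⟩ with hcc
  have hcC0 : cC ≠ 0 := fun h => hc0 (by simpa [hcc, Submodule.mk_eq_zero] using h)
  set L : Submodule F C := Submodule.span F {cC} with hL
  have hrankL : Module.finrank F L = 1 := finrank_span_singleton hcC0
  have hrankQ : Module.finrank F (C ⧸ L) = m := by
    have := Submodule.finrank_quotient_add_finrank L
    rw [hdim, hrankL] at this
    omega
  set w := Module.finBasisOfFinrankEq F (C ⧸ L) hrankQ with hw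
  choose x hxw using fun j : Fin m => Submodule.Quotient.mk_surjective L (w j)
  -- independence of lifts w.r.t. c
  have hind : ∀ a : Fin m → F, a ≠ 0 → ∀ t : F,
      (∑ j, a j • (x j : Fin n → F)) ≠ t • c := by
    intro a ha t heq
    have heqC : (∑ j, a j • x j : C) = t • cC := by
      apply Subtype.ext
      push_cast
      simpa using heq
    have hmk : (∑ j, a j • w j : C ⧸ L) = 0 := by
      have h1 := congrArg L.mkQ heqC
      rw [map_sum] at h1
      simp only [map_smul, Submodule.mkQ_apply] at h1
      simp only [hxw] at h1
      have h2 : Submodule.Quotient.mk (p := L) cC = 0 :=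
        (Submodule.Quotient.mk_eq_zero L).mpr (hL ▸ Submodule.mem_span_singleton_self cC)
      rw [h2, smul_zero] at h1
      exact h1
    have : a = 0 := by
      have hli := w.linearIndependent
      have := linearIndependent_iff'.mp hli Finset.univ a hmk
      funext j
      exact this j (Finset.mem_univ j)
    exact ha this
  -- the blocking set
  set S : Finset (Fin n) := Finset.univ.filter (fun i => c i ≠ 0) with hS
  set B : Finset (Fin m → F) := S.image (fun i => fun j => (x j : Fin n → F) i / c i) with hB
  have hblk : ∀ a : Fin m → F, a ≠ 0 → ∀ t : F, ∃ b ∈ B, ∑ j, a j * b j = t := by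
    intro a ha t
    have hxa : (∑ j, a j • (x j : Fin n → F)) ∈ C :=
      Submodule.sum_mem _ fun j _ => C.smul_mem _ (x j).2
    obtain ⟨i, hci, hxi⟩ := claimA _ hxa (hind a ha) t
    refine ⟨fun j => (x j : Fin n → F) i / c i,
      Finset.mem_image.mpr ⟨i, Finset.mem_filter.mpr ⟨Finset.mem_univ i, hci⟩, rfl⟩, ?_⟩
    have : (∑ j, a j * ((x j : Fin n → F) i / c i)) = (∑ j, a j • (x j : Fin n → F)) i / c i := by
      rw [Finset.sum_apply]
      rw [Finset.sum_div]
      exact Finset.sum_congr rfl fun j _ => by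
        simp [mul_div_assoc]
    rw [this, hxi, mul_div_assoc, div_self hci, mul_one]
  have hmain := blocking_card hm1 B hblk
  have hBle : B.card ≤ S.card := Finset.card_image_le
  have hScard : S.card = d := by
    rw [← hcd]
    rfl
  rw [hq] at hmain
  calc (q - 1) * (k - 1) + 1 = m * (q - 1) + 1 := by rw [hm, Nat.mul_comm]
    _ ≤ B.card := hmain
    _ ≤ d := by omega
end

section
/- Let B be a subset of the affine space AG(k-1, q) = F_q^{k-1} that meets every affine hyperplane (i.e., every coset of a (k-2)-dimensional linear subspace). Then |B| ≥ (q-1)(k-1) + 1. -/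
open MvPolynomial Finset

/-- The linear functional `x ↦ ∑ i, x i * c i` on `Fin (k - 1) → F`. -/
noncomputable def jamisonDot {F : Type*} [CommRing F] {n : ℕ} (c : Fin n → F) :
    (Fin n → F) →ₗ[F] F where
  toFun x := ∑ i, x i * c i
  map_add' x y := by simp [add_mul, Finset.sum_add_distrib]
  map_smul' a x := by simp [Finset.mul_sum, mul_assoc]

theorem jamisonDot_single {F : Type*} [CommRing F] {n : ℕ}
    (c : Fin n → F) (j : Fin n) : jamisonDot c (Pi.single j 1) = c j := by
  classical
  simp only [jamisonDot, LinearMap.coe_mk, AddHom.coe_mk]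
  rw [Finset.sum_eq_single j]
  · simp
  · intro i _ hij
    simp [Pi.single_eq_of_ne hij]
  · simp

/-- Jamison's theorem: an affine blocking set in `AG(k-1, q)`, i.e. a set
meeting every affine hyperplane `{x | f x = a}` with `f` a nonzero linear
functional, has at least `(q-1)(k-1) + 1` points. -/
theorem jamison {F : Type*} [Field F] [Fintype F] [DecidableEq F]
    {k q : ℕ} (hk : 2 ≤ k) (hq : Fintype.card F = q)
    (B : Finset (Fin (k - 1) → F))
    (hblock : ∀ f : (Fin (k - 1) → F) →ₗ[F] F, f ≠ 0 → ∀ a : F, ∃ x ∈ B, f x = a) :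
    (q - 1) * (k - 1) + 1 ≤ B.card := by
  classical
  have hn1 : 1 ≤ k - 1 := by omega
  have hq2 : 2 ≤ q := by rw [← hq]; exact Fintype.one_lt_card
  -- there is a nonzero functional, hence B is nonempty
  have hfex : (LinearMap.proj (⟨0, by omega⟩ : Fin (k - 1)) :
      (Fin (k - 1) → F) →ₗ[F] F) ≠ 0 := by
    intro h
    have := congrArg (fun g : (Fin (k - 1) → F) →ₗ[F] F => g (fun _ => (1 : F))) h
    simp at this
  obtain ⟨b0, hb0, -⟩ := hblock _ hfex 0
  -- translate so that 0 ∈ B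
  set B' : Finset (Fin (k - 1) → F) := B.image (fun x => x - b0) with hB'
  have hcard' : B'.card = B.card :=
    Finset.card_image_of_injective _ (sub_left_injective)
  have h0B' : (0 : Fin (k - 1) → F) ∈ B' :=
    Finset.mem_image.mpr ⟨b0, hb0, sub_self b0⟩
  have hblock' : ∀ f : (Fin (k - 1) → F) →ₗ[F] F, f ≠ 0 → ∀ a : F, ∃ x ∈ B', f x = a := by
    intro f hf a
    obtain ⟨y, hy, hy2⟩ := hblock f hf (a + f b0)
    exact ⟨y - b0, Finset.mem_image.mpr ⟨y, hy, rfl⟩, by rw [map_sub, hy2]; ring⟩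
  set T : Finset (Fin (k - 1) → F) := B'.erase 0 with hT
  have hTcard : T.card = B.card - 1 := by
    rw [hT, Finset.card_erase_of_mem h0B', hcard']
  have hBne : 1 ≤ B.card := Finset.card_pos.mpr ⟨b0, hb0⟩
  by_contra hcon
  push_neg at hcon
  have hM : 1 ≤ (q - 1) * (k - 1) := Nat.one_le_iff_ne_zero.mpr
    (Nat.mul_ne_zero (by omega) (by omega))
  have hTlt : T.card < (q - 1) * (k - 1) := by omega
  -- the blocking polynomial
  set P : MvPolynomial (Fin (k - 1)) F :=
    ∏ b ∈ T, ((∑ i, C (b i) * X i) - 1) with hP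
  have hdeg : P.totalDegree ≤ T.card := by
    refine le_trans (totalDegree_finset_prod _ _) ?_
    have hfac : ∀ b : Fin (k - 1) → F,
        ((∑ i, C (b i) * X i) - 1 : MvPolynomial (Fin (k - 1)) F).totalDegree ≤ 1 := by
      intro b
      refine le_trans (totalDegree_sub _ _) (max_le ?_ (by simp))
      refine le_trans (totalDegree_finset_sum _ _) ?_
      refine Finset.sup_le fun i _ => ?_
      refine le_trans (totalDegree_mul _ _) ?_
      simp [totalDegree_C, totalDegree_X]
    calc ∑ b ∈ T, ((∑ i, C (b i) * X i) - 1 : MvPolynomial (Fin (k - 1)) F).totalDegree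
        ≤ ∑ _b ∈ T, 1 := Finset.sum_le_sum fun b _ => hfac b
      _ = T.card := by simp
  have heval : ∀ c : Fin (k - 1) → F, eval c P = ∏ b ∈ T, ((∑ i, b i * c i) - 1) := by
    intro c
    rw [hP, map_prod]
    refine Finset.prod_congr rfl fun b _ => ?_
    simp [mul_comm]
  -- P vanishes away from 0
  have hzero : ∀ c : Fin (k - 1) → F, c ≠ 0 → eval c P = 0 := by
    intro c hc
    have hfc : jamisonDot c ≠ 0 := by
      intro h
      apply hc
      funext j
      have := congrArg (fun g : (Fin (k - 1) → F) →ₗ[F] F => g (Pi.single j 1)) h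
      simp only [LinearMap.zero_apply] at this
      rw [jamisonDot_single] at this
      simpa using this
    obtain ⟨x, hx, hx1⟩ := hblock' (jamisonDot c) hfc 1
    have hx1' : ∑ i, x i * c i = 1 := hx1
    have hxne : x ≠ 0 := by
      rintro rfl
      simp at hx1'
    have hxT : x ∈ T := Finset.mem_erase.mpr ⟨hxne, hx⟩
    rw [heval]
    exact Finset.prod_eq_zero hxT (sub_eq_zero.mpr hx1')
  have hsum0 : ∑ x : Fin (k - 1) → F, eval x P = eval 0 P :=
    Fintype.sum_eq_single 0 (fun c hc => hzero c hc)
  have h0 : eval 0 P = (-1) ^ T.card := by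
    rw [heval]
    simp
  have hlt : P.totalDegree < (Fintype.card F - 1) * Fintype.card (Fin (k - 1)) := by
    rw [hq, Fintype.card_fin]
    exact lt_of_le_of_lt hdeg hTlt
  have := MvPolynomial.sum_eval_eq_zero P hlt
  rw [hsum0, h0] at this
  exact pow_ne_zero _ (neg_ne_zero.mpr one_ne_zero) this
end

section
/- A nondegenerate linear code C with generator matrix G over F_q is minimal if and only if the multiset of columns of G, viewed as points of the projective space PG(k-1,q), forms a strong blocking set, i.e., for every hyperplane H of PG(k-1,q), the set of these points lying in H spans H. -/
/-!
The code generated by points `p j` of `V` is `{(φ (p j))ⱼ | φ ∈ V*}`, and the codeword of `φ`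
vanishes exactly at the points on the hyperplane `ker φ`. So `supp c_φ' ⊆ supp c_φ` says that the
points on `ker φ` lie on `ker φ'`. If those points span `ker φ`, this forces `ker φ = ker φ'`,
whence equal supports. Conversely, if the points on a hyperplane `W = ker φ` span only `S < W`,
pick a point `p j₀ ∉ W`; by the modular law `S ⊔ ⟨p j₀⟩` is still proper, so it lies in some
hyperplane `ker φ'`, and `supp c_φ' ⊊ supp c_φ`.
-/

open Matrix

open Module Submodule

section PointCodes

variable {F V : Type*} [Field F] [AddCommGroup V] [Module F V] {n : ℕ}

theorem Module.Dual.finrank_ker_eq_sub_one [FiniteDimensional F V] {φ : Dual F V}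
    (hφ : φ ≠ 0) : finrank F (LinearMap.ker φ) = finrank F V - 1 := by
  have := φ.finrank_ker_add_one_of_ne_zero hφ
  omega

theorem Submodule.exists_dual_ker_eq_of_finrank_eq_sub_one [FiniteDimensional F V]
    {W : Submodule F V} (hW : finrank F W = finrank F V - 1) (hWtop : W < ⊤) :
    ∃ φ : Dual F V, φ ≠ 0 ∧ LinearMap.ker φ = W := by
  obtain ⟨φ, hφ, hWφ⟩ := W.exists_le_ker_of_lt_top hWtop
  exact ⟨φ, hφ, (eq_of_le_of_finrank_eq hWφ (by rw [hW, Dual.finrank_ker_eq_sub_one hφ])).symm⟩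

variable (F) in
def evalAtPoints (p : Fin n → V) : Dual F V →ₗ[F] Fin n → F where
  toFun φ j := φ (p j)
  map_add' _ _ := rfl
  map_smul' _ _ := rfl

def pointsIn (p : Fin n → V) (W : Submodule F V) : Set V :=
  {v | (∃ j, p j = v) ∧ v ∈ W}

theorem span_pointsIn_le (p : Fin n → V) (W : Submodule F V) : span F (pointsIn p W) ≤ W :=
  span_le.mpr fun _ hv => hv.2

theorem evalAtPoints_ne_zero_iff {p : Fin n → V} (hp : span F (Set.range p) = ⊤)
    {φ : Dual F V} : evalAtPoints F p φ ≠ 0 ↔ φ ≠ 0 := by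
  refine not_congr ⟨fun h => LinearMap.ext_on_range hp fun j => congrFun h j, ?_⟩
  rintro rfl
  exact map_zero _

theorem mem_codeSupp_evalAtPoints_iff (p : Fin n → V) (φ : Dual F V) (j : Fin n) :
    j ∈ codeSupp (evalAtPoints F p φ) ↔ p j ∉ LinearMap.ker φ :=
  Iff.rfl

theorem codeSupp_evalAtPoints_subset_iff (p : Fin n → V) (φ φ' : Dual F V) :
    codeSupp (evalAtPoints F p φ') ⊆ codeSupp (evalAtPoints F p φ) ↔
      span F (pointsIn p (LinearMap.ker φ)) ≤ LinearMap.ker φ' := by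
  rw [span_le]
  constructor
  · rintro h _ ⟨⟨j, rfl⟩, hj⟩
    by_contra hj'
    exact h hj' hj
  · intro h j hj' hj
    exact hj' (h ⟨⟨j, rfl⟩, hj⟩)

theorem isMinimalCode_of_span_pointsIn_eq {p : Fin n → V} [FiniteDimensional F V]
    (hsb : ∀ W : Submodule F V, finrank F W = finrank F V - 1 → span F (pointsIn p W) = W) :
    IsMinimalCode (LinearMap.range (evalAtPoints F p)) := by
  rintro _ ⟨φ, rfl⟩ hφ _ ⟨φ', rfl⟩ hφ' ⟨hsub, hnsub⟩
  replace hφ : φ ≠ 0 := by rintro rfl; exact hφ (map_zero _)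
  replace hφ' : φ' ≠ 0 := by rintro rfl; exact hφ' (map_zero _)
  rw [codeSupp_evalAtPoints_subset_iff, hsb _ (Dual.finrank_ker_eq_sub_one hφ)] at hsub
  have hker : LinearMap.ker φ = LinearMap.ker φ' := eq_of_le_of_finrank_eq hsub <| by
    rw [Dual.finrank_ker_eq_sub_one hφ, Dual.finrank_ker_eq_sub_one hφ']
  exact hnsub ((codeSupp_evalAtPoints_subset_iff p φ' φ).mpr (hker ▸ span_pointsIn_le _ _))

theorem span_pointsIn_eq_of_isMinimalCode {p : Fin n → V} [FiniteDimensional F V]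
    (hp : span F (Set.range p) = ⊤) (hmin : IsMinimalCode (LinearMap.range (evalAtPoints F p)))
    {W : Submodule F V} (hW : finrank F W = finrank F V - 1) : span F (pointsIn p W) = W := by
  set S := span F (pointsIn p W)
  by_contra hne
  have hSW : S < W := (span_pointsIn_le p W).lt_of_ne hne
  have hWtop : W < ⊤ := by
    have := finrank_lt_finrank_of_lt hSW
    exact lt_top_of_finrank_lt_finrank (by omega)
  obtain ⟨φ, hφ, hφW⟩ := W.exists_dual_ker_eq_of_finrank_eq_sub_one hW hWtop
  obtain ⟨j₀, hj₀⟩ : ∃ j, p j ∉ W := by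
    by_contra! h
    exact hWtop.ne (eq_top_iff.mpr (hp ▸ span_le.mpr (Set.range_subset_iff.mpr h)))
  have hU : S ⊔ span F {p j₀} < ⊤ := by
    refine lt_top_iff_ne_top.mpr fun hU => hSW.ne ?_
    calc S = S ⊔ span F {p j₀} ⊓ W := by
          rw [(disjoint_span_singleton_of_notMem hj₀).symm.eq_bot, sup_bot_eq]
      _ = (S ⊔ span F {p j₀}) ⊓ W := (sup_inf_assoc_of_le _ hSW.le).symm
      _ = W := by rw [hU, top_inf_eq]
  obtain ⟨φ', hφ', hUφ'⟩ := (S ⊔ span F {p j₀}).exists_le_ker_of_lt_top hU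
  refine hmin _ ⟨φ, rfl⟩ ((evalAtPoints_ne_zero_iff hp).mpr hφ)
    _ ⟨φ', rfl⟩ ((evalAtPoints_ne_zero_iff hp).mpr hφ') ⟨?_, fun h => ?_⟩
  · rw [codeSupp_evalAtPoints_subset_iff, hφW]
    exact le_sup_left.trans hUφ'
  · refine (mem_codeSupp_evalAtPoints_iff p φ' j₀).mp (h ?_) ?_
    · rwa [mem_codeSupp_evalAtPoints_iff, hφW]
    · exact hUφ' (mem_sup_right (mem_span_singleton_self _))

theorem isMinimalCode_range_evalAtPoints_iff {p : Fin n → V} [FiniteDimensional F V]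
    (hp : span F (Set.range p) = ⊤) :
    IsMinimalCode (LinearMap.range (evalAtPoints F p)) ↔
      ∀ W : Submodule F V, finrank F W = finrank F V - 1 → span F (pointsIn p W) = W :=
  ⟨fun hmin _ => span_pointsIn_eq_of_isMinimalCode hp hmin, isMinimalCode_of_span_pointsIn_eq⟩

theorem Matrix.range_vecMulLinear_eq_range_evalAtPoints {k : ℕ} (G : Matrix (Fin k) (Fin n) F) :
    LinearMap.range G.vecMulLinear = LinearMap.range (evalAtPoints F Gᵀ) := by
  have : G.vecMulLinear = evalAtPoints F Gᵀ ∘ₗ (Module.piEquiv (Fin k) F F).toLinearMap := by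
    refine LinearMap.ext fun x => funext fun j => ?_
    simp [evalAtPoints, Module.piEquiv_apply_apply, vecMul, dotProduct, mul_comm]
  rw [this, LinearMap.range_comp_of_range_eq_top _ (LinearEquiv.range _)]

theorem Matrix.span_range_transpose_eq_top {k : ℕ} {G : Matrix (Fin k) (Fin n) F}
    (hrank : G.rank = k) : span F (Set.range Gᵀ) = ⊤ :=
  eq_top_of_finrank_eq <| ((rank_eq_finrank_span_cols G).symm.trans hrank).trans
    (finrank_fin_fun F).symm

end PointCodes

theorem minimal_iff_strongBlockingSet_general {F : Type*} [Field F]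
    {k n : ℕ} (G : Matrix (Fin k) (Fin n) F)
    (hrank : G.rank = k) :
    IsMinimalCode (LinearMap.range G.vecMulLinear) ↔
      ∀ W : Submodule F (Fin k → F), Module.finrank F W = k - 1 →
        Submodule.span F {v : Fin k → F | (∃ j : Fin n, Gᵀ j = v) ∧ v ∈ W} = W := by
  rw [G.range_vecMulLinear_eq_range_evalAtPoints,
    isMinimalCode_range_evalAtPoints_iff (span_range_transpose_eq_top hrank), finrank_fin_fun]
  rfl

/-- A nondegenerate code (row span of a full-rank generator matrix `G` with no
zero column) is minimal if and only if the columns of `G`, viewed as points of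
the projective space `PG(k-1,q)` (equivalently, nonzero vectors of `F_q^k` up
to collinearity), form a strong blocking set: for every hyperplane `W` (a
`(k-1)`-dimensional subspace of `F_q^k`), the columns lying in `W` span `W`. -/
theorem minimal_iff_strongBlockingSet {F : Type*} [Field F] [Fintype F] [DecidableEq F]
    {k n : ℕ} (G : Matrix (Fin k) (Fin n) F)
    (hrank : G.rank = k) (hnondeg : ∀ j : Fin n, Gᵀ j ≠ 0) :
    IsMinimalCode (LinearMap.range G.vecMulLinear) ↔
      ∀ W : Submodule F (Fin k → F), Module.finrank F W = k - 1 →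
        Submodule.span F {v : Fin k → F | (∃ j : Fin n, Gᵀ j = v) ∧ v ∈ W} = W :=
  minimal_iff_strongBlockingSet_general G hrank
end

section
/- There is no family P_1, ..., P_{N+1} of subsets of {1, ..., 2N-1} with N = 6 (i.e., 7 subsets of {1,...,11}), each of size 6, with pairwise intersections of size exactly 3, empty total symmetric difference, and such that for any three distinct indices i, j, l, the symmetric difference P_i Δ P_j Δ P_l has cardinality between N-2 and N+2. (Consequently there is no binary [18,7] minimal code.) -/
/-- There is no family of `7` subsets of `{1,…,11}` (here `Fin 11`), each of
size `6`, with pairwise intersections of size exactly `3`, empty total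
symmetric difference, and all triple symmetric differences of cardinality
between `4` and `8`. (Consequently there is no binary `[18,7]` minimal code.) -/
theorem no_family_N6 :
    ¬ ∃ P : Fin 7 → Finset (Fin 11),
      (∀ i, (P i).card = 6) ∧
      (∀ i j, i ≠ j → (P i ∩ P j).card = 3) ∧
      (∀ x : Fin 11, Even (Finset.univ.filter (fun i => x ∈ P i)).card) ∧
      (∀ i j l, i ≠ j → j ≠ l → i ≠ l →
        4 ≤ (symmDiff (symmDiff (P i) (P j)) (P l)).card ∧
        (symmDiff (symmDiff (P i) (P j)) (P l)).card ≤ 8) := by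
  rintro ⟨P, hcard, hpair, heven, -⟩
  set d : Fin 11 → ℕ := fun x => (Finset.univ.filter (fun i => x ∈ P i)).card with hd
  have hdval : ∀ x, d x = ∑ i : Fin 7, if x ∈ P i then 1 else 0 := by
    intro x; exact Finset.card_filter _ _
  -- sum of degrees
  have h1 : ∑ x : Fin 11, d x = 42 := by
    calc ∑ x : Fin 11, d x = ∑ x : Fin 11, ∑ i : Fin 7, if x ∈ P i then 1 else 0 := by
          simp [hdval]
      _ = ∑ i : Fin 7, ∑ x : Fin 11, if x ∈ P i then 1 else 0 := Finset.sum_comm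
      _ = ∑ i : Fin 7, (P i).card := by
          refine Finset.sum_congr rfl fun i _ => ?_
          rw [← Finset.card_filter, Finset.filter_univ_mem]
      _ = 42 := by simp [hcard]
  -- sum of squares of degrees
  have h2 : ∑ x : Fin 11, d x * d x = 168 := by
    have step1 : ∀ x : Fin 11, d x * d x
        = ∑ i : Fin 7, ∑ j : Fin 7, if x ∈ P i ∧ x ∈ P j then 1 else 0 := by
      intro x
      rw [hdval, Finset.sum_mul_sum]
      refine Finset.sum_congr rfl fun i _ => Finset.sum_congr rfl fun j _ => ?_
      by_cases h1 : x ∈ P i <;> by_cases h2 : x ∈ P j <;> simp [h1, h2]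
    have step2 : ∑ x : Fin 11, d x * d x
        = ∑ i : Fin 7, ∑ j : Fin 7, (P i ∩ P j).card := by
      calc ∑ x : Fin 11, d x * d x
          = ∑ x : Fin 11, ∑ i : Fin 7, ∑ j : Fin 7, if x ∈ P i ∧ x ∈ P j then 1 else 0 := by
            simp [step1]
        _ = ∑ i : Fin 7, ∑ x : Fin 11, ∑ j : Fin 7, if x ∈ P i ∧ x ∈ P j then 1 else 0 :=
            Finset.sum_comm
        _ = ∑ i : Fin 7, ∑ j : Fin 7, ∑ x : Fin 11, if x ∈ P i ∧ x ∈ P j then 1 else 0 := by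
            exact Finset.sum_congr rfl fun i _ => Finset.sum_comm
        _ = ∑ i : Fin 7, ∑ j : Fin 7, (P i ∩ P j).card := by
            refine Finset.sum_congr rfl fun i _ => Finset.sum_congr rfl fun j _ => ?_
            rw [← Finset.card_filter]
            congr 1
            ext x
            simp [Finset.mem_inter]
    have hpt : ∀ i j : Fin 7, (P i ∩ P j).card = if i = j then 6 else 3 := by
      intro i j
      by_cases h : i = j
      · subst h; simp [hcard]
      · simp [h, hpair i j h]
    rw [step2]
    have : ∀ i : Fin 7, ∑ j : Fin 7, (P i ∩ P j).card = 24 := by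
      intro i
      calc ∑ j : Fin 7, (P i ∩ P j).card
          = ∑ j : Fin 7, (3 + if i = j then 3 else 0) := by
            refine Finset.sum_congr rfl fun j _ => ?_
            rw [hpt]
            by_cases h : i = j <;> simp [h]
        _ = 21 + ∑ j : Fin 7, if i = j then 3 else 0 := by
            rw [Finset.sum_add_distrib]; simp
        _ = 24 := by rw [Finset.sum_ite_eq]; simp
    simp [this]
  -- divisibility
  have key : ∀ x : Fin 11, (8 : ℕ) ∣ d x * (d x + 2) := by
    intro x
    obtain ⟨k, hk⟩ := heven x
    have hdx : d x = k + k := hk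
    obtain ⟨m, hm⟩ := (Nat.even_mul_succ_self k)
    exact ⟨m, by rw [hdx]; nlinarith [hm]⟩
  have hdvd : (8 : ℕ) ∣ ∑ x : Fin 11, d x * (d x + 2) :=
    Finset.dvd_sum fun x _ => key x
  have htot : ∑ x : Fin 11, d x * (d x + 2) = 252 := by
    have : ∑ x : Fin 11, d x * (d x + 2)
        = ∑ x : Fin 11, (d x * d x + 2 * d x) := by
      refine Finset.sum_congr rfl fun x _ => by ring
    rw [this, Finset.sum_add_distrib, h2, ← Finset.mul_sum, h1]; norm_num
  rw [htot] at hdvd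
  omega
end

section
/- Let N ≡ 4 (mod 8). There is no family P_1, ..., P_{N+1} of subsets of {1, ..., 2N-1}, each of size N, with all pairwise intersections of size N/2, empty total symmetric difference, and such that P_1 = {1,...,N}, P_2 = {N/2+1,...,3N/2}, and every other P_i satisfies |P_i ∩ ({3N/2+1,...,2N-1})| = N/4. (Consequently there is no binary minimal [3N, N+1] code when N ≡ 4 mod 8.) -/
/-!
Let `T = {3N/2+1, …, 2N-1}`. Counting the incidences between the family and `T` in two ways:
by elements of `T`, each lies in an even number of the `P_i`, so the count is even; by sets,
`P_1` and `P_2` miss `T` while the other `N - 1` sets meet it in `N/4` elements each, so the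
count is `(N - 1) · N/4`, which is odd when `N ≡ 4 (mod 8)`.
-/

open Finset

theorem Finset.sum_card_inter_eq_sum_card_filter_mem {ι α : Type*} [DecidableEq α]
    (s : Finset ι) (P : ι → Finset α) (T : Finset α) :
    ∑ i ∈ s, #(P i ∩ T) = ∑ x ∈ T, #{i ∈ s | x ∈ P i} := by
  simp_rw [inter_comm, ← filter_mem_eq_inter, card_eq_sum_ones, sum_filter]
  exact sum_comm

theorem Finset.even_sum_card_inter {ι α : Type*} [DecidableEq α]
    (s : Finset ι) (P : ι → Finset α) (T : Finset α)
    (h : ∀ x ∈ T, Even #{i ∈ s | x ∈ P i}) :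
    Even (∑ i ∈ s, #(P i ∩ T)) := by
  rw [sum_card_inter_eq_sum_card_filter_mem]
  exact even_sum _ h

theorem Fin.card_filter_le_val (n m : ℕ) : #{i : Fin n | m ≤ (i : ℕ)} = n - m := by
  have hsplit := card_filter_add_card_filter_not (s := (univ : Finset (Fin n))) (m ≤ ·)
  simp only [not_le, Fin.card_filter_val_lt, card_univ, Fintype.card_fin] at hsplit
  omega

theorem Fin.eq_zero_or_eq_one_of_val_lt_two {n : ℕ} (i : Fin (n + 1)) (hi : (i : ℕ) < 2) :
    i = 0 ∨ i = 1 := by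
  rcases n with _ | n
  · exact .inl (Fin.fin_one_eq_zero i)
  · rw [Fin.ext_iff, Fin.ext_iff, Fin.val_zero, Fin.val_one]
    omega

/-- For `N ≡ 4 (mod 8)`, there is no family of `N+1` subsets of
`{1,…,2N-1}` (here `Fin (2N-1)`, zero-based), each of size `N`, with all
pairwise intersections of size `N/2`, empty total symmetric difference,
with `P_1 = {1,…,N}` and `P_2 = {N/2+1,…,3N/2}`, and every other member
meeting `{3N/2+1,…,2N-1}` in exactly `N/4` elements. (Consequently there is
no binary minimal `[3N, N+1]` code when `N ≡ 4 (mod 8)`.) -/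
theorem no_family_N_mod8 {N : ℕ} (hN : N % 8 = 4) :
    ¬ ∃ P : Fin (N + 1) → Finset (Fin (2 * N - 1)),
      (∀ i, (P i).card = N) ∧
      (∀ i j, i ≠ j → (P i ∩ P j).card = N / 2) ∧
      (∀ x : Fin (2 * N - 1), Even (Finset.univ.filter (fun i => x ∈ P i)).card) ∧
      P 0 = Finset.univ.filter (fun x : Fin (2 * N - 1) => (x : ℕ) < N) ∧
      P 1 = Finset.univ.filter
        (fun x : Fin (2 * N - 1) => N / 2 ≤ (x : ℕ) ∧ (x : ℕ) < N + N / 2) ∧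
      (∀ i : Fin (N + 1), 2 ≤ (i : ℕ) →
        (P i ∩ Finset.univ.filter (fun x : Fin (2 * N - 1) => N + N / 2 ≤ (x : ℕ))).card
          = N / 4) := by
  rintro ⟨P, -, -, heven, h0, h1, hT⟩
  set T : Finset (Fin (2 * N - 1)) := {x | N + N / 2 ≤ (x : ℕ)}
  have hlow : ∀ i : Fin (N + 1), ¬ 2 ≤ (i : ℕ) → #(P i ∩ T) = 0 := by
    intro i hi
    rw [card_eq_zero, ← disjoint_iff_inter_eq_empty, disjoint_left]
    intro x
    obtain rfl | rfl := Fin.eq_zero_or_eq_one_of_val_lt_two i (by omega)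
    · simp only [h0, T, mem_filter, mem_univ, true_and]
      omega
    · simp only [h1, T, mem_filter, mem_univ, true_and]
      omega
  have hcount : ∑ i, #(P i ∩ T) = (N - 1) * (N / 4) := by
    rw [← sum_filter_add_sum_filter_not univ (2 ≤ ·.val),
      sum_const_nat fun i hi ↦ hT i (mem_filter.1 hi).2,
      sum_eq_zero fun i hi ↦ hlow i (mem_filter.1 hi).2, Fin.card_filter_le_val, add_zero,
      show N + 1 - 2 = N - 1 by omega]
  have hodd : Odd ((N - 1) * (N / 4)) :=
    Nat.odd_mul.2 ⟨Nat.odd_iff.2 (by omega), Nat.odd_iff.2 (by omega)⟩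
  exact Nat.not_even_iff_odd.2 hodd (hcount ▸ even_sum_card_inter univ P T fun x _ ↦ heven x)
end

section
/- Let C be a binary minimal code of length 3(k-1) and dimension k ≥ 3. Then C is equivalent (up to coordinate permutation) to a code with generator matrix G = (I_k | P), where P is a k × (2k-3) binary matrix each of whose rows has Hamming weight k-1 and each of whose columns has even Hamming weight; moreover the minimum distance of C is k. -/
/-!
In a minimal code no nonzero codeword vanishes on the support of another, so restricting to
`supp c` is injective and restricting to its complement has kernel `⟨c⟩`; hence every nonzero
weight lies in `[k, n + 1 - k]`, which is `[k, 2k - 2]` for `n = 3(k - 1)`. For a codeword `c` of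
maximal weight, the residual code off `supp c` has dimension `k - 1` and so contains a word `y`
of weight `≥ k - 1` there; comparing `c` with `y` and `y + c` gives `wt c ≥ 2k - 2`. Thus
`wt c = 2k - 2`, the `k - 1` coordinates off `supp c` carry the full residual code, and lifting a
unit vector there gives a codeword `s` of weight exactly `k`. Now `supp s` is an information set.
The codewords `b t` that are unit vectors on it have weight `k` because
`wt (s + b t) = k + wt (b t) - 2 ≤ 2k - 2`, and they sum to `s`, which vanishes off `supp s`:
these are the rows of `(I_k | P)` and the reason its columns are even.
-/

open Finset

namespace LinearCode

open Module

variable {F ι : Type*} [Field F]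

section Restrict

def restrict (D : Submodule F (ι → F)) (T : Finset ι) : D →ₗ[F] (T → F) :=
  (LinearMap.funLeft F F ((↑) : T → ι)).comp D.subtype

@[simp]
theorem restrict_apply (D : Submodule F (ι → F)) (T : Finset ι) (x : D) (t : T) :
    restrict D T x t = (x : ι → F) t := rfl

theorem mem_ker_restrict {D : Submodule F (ι → F)} {T : Finset ι} {x : D} :
    x ∈ LinearMap.ker (restrict D T) ↔ ∀ i ∈ T, (x : ι → F) i = 0 := by
  simp [LinearMap.mem_ker, funext_iff]

theorem finrank_le_card_of_injective_restrict {D : Submodule F (ι → F)} {T : Finset ι}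
    (h : Function.Injective (restrict D T)) : finrank F D ≤ #T := by
  simpa using LinearMap.finrank_le_finrank_of_injective h

end Restrict

section Support

variable [Fintype ι] [DecidableEq F]

def supp (v : ι → F) : Finset ι := {i | v i ≠ 0}

theorem mem_supp {v : ι → F} {i : ι} : i ∈ supp v ↔ v i ≠ 0 := by
  simp [supp]

theorem hammingNorm_eq_card_supp (v : ι → F) : hammingNorm v = #(supp v) := rfl

theorem supp_nonempty {v : ι → F} (h : v ≠ 0) : (supp v).Nonempty :=
  card_pos.mp (hammingNorm_pos_iff.mpr h)

theorem codeSupp_eq_coe_supp {n : ℕ} (v : Fin n → F) : codeSupp v = supp v := by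
  ext
  simp [codeSupp, mem_supp]

theorem supp_add_of_disjoint [DecidableEq ι] {x y : ι → F} (h : Disjoint (supp x) (supp y)) :
    supp (x + y) = supp x ∪ supp y := by
  ext i
  have hi : i ∈ supp x → i ∉ supp y := fun hx => disjoint_left.mp h hx
  simp only [mem_supp, mem_union, Pi.add_apply] at hi ⊢
  by_cases hx : x i = 0 <;> simp_all

theorem hammingNorm_add_of_disjoint [DecidableEq ι] {x y : ι → F}
    (h : Disjoint (supp x) (supp y)) : hammingNorm (x + y) = hammingNorm x + hammingNorm y := by
  simp only [hammingNorm_eq_card_supp, supp_add_of_disjoint h, card_union_of_disjoint h]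

theorem hammingNorm_comp_equiv {κ : Type*} [Fintype κ] (v : ι → F) (e : κ ≃ ι) :
    hammingNorm (fun j => v (e j)) = hammingNorm v :=
  card_equiv e fun j => by simp

theorem exists_forall_hammingNorm_le (D : Submodule F (ι → F)) :
    ∃ y ∈ D, ∀ x ∈ D, hammingNorm x ≤ hammingNorm y := by
  have hbdd : BddAbove (hammingNorm '' (D : Set (ι → F))) :=
    ⟨Fintype.card ι, by rintro _ ⟨x, -, rfl⟩; exact hammingNorm_le_card_fintype⟩
  obtain ⟨y, hy, hmax⟩ := Nat.sSup_mem (Set.Nonempty.image _ ⟨0, D.zero_mem⟩) hbdd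
  exact ⟨y, hy, fun x hx => hmax ▸ le_csSup hbdd ⟨x, hx, rfl⟩⟩

theorem hammingNorm_restrict [DecidableEq ι] (D : Submodule F (ι → F)) (T : Finset ι) (x : D) :
    hammingNorm (restrict D T x) = #(supp (x : ι → F) ∩ T) := by
  rw [hammingNorm_eq_card_supp, ← card_map (Function.Embedding.subtype _)]
  congr 1
  ext i
  simp [mem_supp, and_comm]

theorem exists_finrank_le_hammingNorm [DecidableEq ι] (D : Submodule F (ι → F)) :
    ∃ y ∈ D, finrank F D ≤ hammingNorm y := by
  obtain ⟨y, hyD, hmax⟩ := exists_forall_hammingNorm_le D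
  refine ⟨y, hyD, finrank_le_card_of_injective_restrict ?_⟩
  rw [← LinearMap.ker_eq_bot, eq_bot_iff]
  intro x hx
  by_contra hx0
  have hdisj : Disjoint (supp y) (supp (x : ι → F)) :=
    disjoint_left.mpr fun i hi hxi => mem_supp.mp hxi (mem_ker_restrict.mp hx i hi)
  have hpos : 0 < hammingNorm (x : ι → F) :=
    hammingNorm_pos_iff.mpr (by simpa using hx0)
  have := hmax _ (D.add_mem hyD x.2)
  rw [hammingNorm_add_of_disjoint hdisj] at this
  omega

end Support

theorem map_funLeft_eq_range_vecMulLinear {κ m : Type*} [Fintype m] (D : Submodule F (ι → F))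
    (b : Basis κ F D) (σ : m ≃ κ) (π : Equiv.Perm ι) :
    D.map (LinearMap.funLeft F F π) =
      LinearMap.range (Matrix.of fun i j => (b (σ i) : ι → F) (π j)).vecMulLinear := by
  have hrows : Set.range (Matrix.of fun i j => (b (σ i) : ι → F) (π j)).row =
      LinearMap.funLeft F F π '' (D.subtype '' Set.range b) := by
    rw [← Set.range_comp, ← Set.range_comp, ← σ.surjective.range_comp]
    rfl
  rw [range_vecMulLinear, hrows, Submodule.span_image, Submodule.span_image, b.span_eq,
    Submodule.map_subtype_top]

section Basis

variable [DecidableEq ι] {D : Submodule F (ι → F)} {T : Finset ι}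
  (h : Function.Bijective (restrict D T))

noncomputable def basisOfBijectiveRestrict : Basis T F D :=
  .ofEquivFun (LinearEquiv.ofBijective _ h)

theorem restrict_basisOfBijectiveRestrict (t : T) :
    restrict D T (basisOfBijectiveRestrict h t) = Pi.single t 1 := by
  rw [basisOfBijectiveRestrict, Basis.coe_ofEquivFun]
  exact (LinearEquiv.ofBijective _ h).apply_symm_apply _

theorem basisOfBijectiveRestrict_apply_of_mem (t : T) {i : ι} (hi : i ∈ T) :
    (basisOfBijectiveRestrict h t : ι → F) i = if i = t then 1 else 0 := by
  have := congr_fun (restrict_basisOfBijectiveRestrict h t) ⟨i, hi⟩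
  simp only [restrict_apply] at this
  simp [this, Pi.single_apply, ← Subtype.coe_inj]

theorem sum_basisOfBijectiveRestrict {s : ι → F} (hs : s ∈ D) (hsT : ∀ i ∈ T, s i = 1) :
    ∑ t, (basisOfBijectiveRestrict h t : ι → F) = s := by
  have : ∑ t, basisOfBijectiveRestrict h t = ⟨s, hs⟩ := by
    refine h.injective ?_
    simp only [map_sum, restrict_basisOfBijectiveRestrict, univ_sum_single]
    exact funext fun t => (hsT t t.2).symm
  simpa using congr_arg Subtype.val this

theorem inter_supp_basisOfBijectiveRestrict [Fintype ι] [DecidableEq F] (t : T) :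
    T ∩ supp (basisOfBijectiveRestrict h t : ι → F) = {(t : ι)} := by
  ext i
  by_cases hi : i ∈ T
  · simp [hi, mem_supp, basisOfBijectiveRestrict_apply_of_mem h t hi]
  · simp only [mem_inter, hi, false_and, mem_singleton, false_iff]
    exact fun hit => hi (hit ▸ t.2)

end Basis

theorem exists_perm_initial_segment {n k : ℕ} (T : Finset (Fin n)) (hT : #T = k) :
    ∃ π : Equiv.Perm (Fin n), ∃ σ : Fin k ≃ T,
      (∀ (j : Fin n) (hj : (j : ℕ) < k), π j = σ ⟨j, hj⟩) ∧
        ∀ j : Fin n, k ≤ (j : ℕ) → π j ∉ T := by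
  have hkn : k ≤ n := hT ▸ (card_le_univ T).trans_eq (Fintype.card_fin n)
  let σ : Fin k ≃ T := (Fintype.equivFinOfCardEq (by simpa using hT)).symm
  let e : {j : Fin n // (j : ℕ) < k} ≃ T := (Fin.castLEquiv hkn).symm.trans σ
  refine ⟨e.extendSubtype, σ, fun j hj => e.extendSubtype_apply_of_mem j hj, fun j hj => ?_⟩
  exact e.extendSubtype_not_mem j (by omega)

section Binary

variable [Fintype ι]

theorem hammingNorm_add_add_two_mul_card_inter [DecidableEq ι] (x y : ι → ZMod 2) :
    hammingNorm (x + y) + 2 * #(supp x ∩ supp y) = hammingNorm x + hammingNorm y := by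
  have hsupp : supp (x + y) = (supp x ∪ supp y) \ (supp x ∩ supp y) := by
    ext i
    simp only [mem_supp, mem_sdiff, mem_union, mem_inter, Pi.add_apply]
    generalize x i = a
    generalize y i = b
    revert a b
    decide
  have := card_sdiff_add_card_eq_card
    (inter_subset_left.trans subset_union_left : supp x ∩ supp y ⊆ supp x ∪ supp y)
  have := card_union_add_card_inter (supp x) (supp y)
  simp only [hammingNorm_eq_card_supp, hsupp]
  omega

theorem natCast_card_filter_ne_zero (f : ι → ZMod 2) : (#{i | f i ≠ 0} : ZMod 2) = ∑ i, f i := by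
  rw [← sum_boole]
  refine sum_congr rfl fun i _ => ?_
  generalize f i = a
  revert a
  decide

end Binary

end LinearCode

namespace IsMinimalCode

open LinearCode Module

variable {F : Type*} [Field F] [DecidableEq F] {n : ℕ} {C : Submodule F (Fin n → F)}
  {c x : Fin n → F}

theorem not_supp_ssubset (hmin : IsMinimalCode C) (hc : c ∈ C) (hc0 : c ≠ 0) (hx : x ∈ C)
    (hx0 : x ≠ 0) : ¬ supp x ⊂ supp c := by
  rw [← coe_ssubset, ← codeSupp_eq_coe_supp, ← codeSupp_eq_coe_supp]
  exact hmin c hc hc0 x hx hx0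

theorem eq_zero_of_forall_mem_supp (hmin : IsMinimalCode C) (hc : c ∈ C) (hc0 : c ≠ 0)
    (hx : x ∈ C) (hxc : ∀ i ∈ supp c, x i = 0) : x = 0 := by
  by_contra hx0
  have hdisj : Disjoint (supp c) (supp x) :=
    disjoint_left.mpr fun i hi hxi => mem_supp.mp hxi (hxc i hi)
  obtain ⟨i, hi⟩ := supp_nonempty hx0
  have hss : supp c ⊂ supp (c + x) := by
    rw [supp_add_of_disjoint hdisj, ssubset_iff_of_subset subset_union_left]
    exact ⟨i, mem_union_right _ hi, disjoint_right.mp hdisj hi⟩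
  refine hmin.not_supp_ssubset (C.add_mem hc hx) ?_ hc hc0 hss
  intro hcx
  rw [hcx] at hss
  simp [supp] at hss

theorem injective_restrict_supp (hmin : IsMinimalCode C) (hc : c ∈ C) (hc0 : c ≠ 0) :
    Function.Injective (restrict C (supp c)) := by
  rw [← LinearMap.ker_eq_bot, eq_bot_iff]
  intro x hx
  exact Subtype.ext (hmin.eq_zero_of_forall_mem_supp hc hc0 x.2 (mem_ker_restrict.mp hx))

theorem finrank_le_hammingNorm (hmin : IsMinimalCode C) (hc : c ∈ C) (hc0 : c ≠ 0) :
    finrank F C ≤ hammingNorm c :=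
  finrank_le_card_of_injective_restrict (hmin.injective_restrict_supp hc hc0)

theorem exists_smul_eq_of_supp_subset (hmin : IsMinimalCode C) (hc : c ∈ C) (hx : x ∈ C)
    (hxc : supp x ⊆ supp c) : ∃ a : F, a • c = x := by
  by_cases hx0 : x = 0
  · exact ⟨0, by simp [hx0]⟩
  obtain ⟨i, hi⟩ := supp_nonempty hx0
  have hci := mem_supp.mp (hxc hi)
  have hxi := mem_supp.mp hi
  -- `c - a • x` vanishes at `i`, so minimality forces it to vanish everywhere
  set a := c i / x i
  have hy : c - a • x = 0 := by
    by_contra hy0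
    refine hmin.not_supp_ssubset hc (fun h => hci (by simp [h])) (C.sub_mem hc (C.smul_mem a hx))
      hy0 ?_
    have hsub : supp (c - a • x) ⊆ supp c := fun j hj => by
      by_contra hcj
      have hxj : x j = 0 := by simpa [mem_supp] using mt (@hxc j) hcj
      simp_all [mem_supp]
    refine (ssubset_iff_of_subset hsub).mpr ⟨i, hxc hi, ?_⟩
    simp [mem_supp, a, div_mul_cancel₀ _ hxi]
  refine ⟨a⁻¹, ?_⟩
  rw [sub_eq_zero.mp hy, smul_smul, inv_mul_cancel₀ (div_ne_zero hci hxi), one_smul]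

theorem finrank_le_finrank_range_restrict_add_one (hmin : IsMinimalCode C) (hc : c ∈ C) :
    finrank F C ≤ finrank F (LinearMap.range (restrict C (supp c)ᶜ)) + 1 := by
  have hker : LinearMap.ker (restrict C (supp c)ᶜ) ≤ F ∙ (⟨c, hc⟩ : C) := by
    intro x hx
    have hxc : supp (x : Fin n → F) ⊆ supp c := fun i hi => by
      by_contra hic
      exact mem_supp.mp hi (mem_ker_restrict.mp hx i (mem_compl.mpr hic))
    obtain ⟨a, ha⟩ := hmin.exists_smul_eq_of_supp_subset hc x.2 hxc
    exact Submodule.mem_span_singleton.mpr ⟨a, Subtype.ext ha⟩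
  have hrank := LinearMap.finrank_range_add_finrank_ker (restrict C (supp c)ᶜ)
  have hspan := finrank_span_le_card (R := F) ({⟨c, hc⟩} : Set C)
  have := Submodule.finrank_mono hker
  simp only [Set.toFinset_singleton, card_singleton] at hspan
  omega

theorem hammingNorm_add_finrank_le (hmin : IsMinimalCode C) (hc : c ∈ C) :
    hammingNorm c + finrank F C ≤ n + 1 := by
  have hrange := Submodule.finrank_le (LinearMap.range (restrict C (supp c)ᶜ))
  rw [finrank_fintype_fun_eq_card, Fintype.card_coe, card_compl, Fintype.card_fin] at hrange
  have := hmin.finrank_le_finrank_range_restrict_add_one hc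
  have := card_le_univ (supp c)
  rw [hammingNorm_eq_card_supp]
  simp only [Fintype.card_fin] at this
  omega

theorem bijective_restrict_supp (hmin : IsMinimalCode C) (hc : c ∈ C) (hc0 : c ≠ 0)
    (hwc : hammingNorm c = finrank F C) : Function.Bijective (restrict C (supp c)) := by
  have hinj := hmin.injective_restrict_supp hc hc0
  refine ⟨hinj, (LinearMap.injective_iff_surjective_of_finrank_eq_finrank ?_).mp hinj⟩
  simp [← hwc, hammingNorm_eq_card_supp]

section Binary

variable {k : ℕ} {C : Submodule (ZMod 2) (Fin n → ZMod 2)} {c s v : Fin n → ZMod 2}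

theorem two_mul_finrank_le_hammingNorm_add_two (hmin : IsMinimalCode C) (hc : c ∈ C)
    (hmax : ∀ x ∈ C, hammingNorm x ≤ hammingNorm c) :
    2 * finrank (ZMod 2) C ≤ hammingNorm c + 2 := by
  obtain ⟨_, ⟨y, rfl⟩, hy⟩ :=
    exists_finrank_le_hammingNorm (LinearMap.range (restrict C (supp c)ᶜ))
  rw [hammingNorm_restrict, ← sdiff_eq_inter_compl] at hy
  -- maximality of `c` against `y` and `y + c` bounds the part of `y` off `supp c` by `wt c / 2`
  have := hmin.finrank_le_finrank_range_restrict_add_one hc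
  have := hammingNorm_add_add_two_mul_card_inter (y : Fin n → ZMod 2) c
  have := card_inter_add_card_sdiff (supp (y : Fin n → ZMod 2)) (supp c)
  have := hmax y y.2
  have := hmax _ (C.add_mem y.2 hc)
  rw [hammingNorm_eq_card_supp (y : Fin n → ZMod 2)] at *
  omega

theorem hammingNorm_eq_of_card_sdiff_eq_one (hmin : IsMinimalCode C)
    (hdim : finrank (ZMod 2) C = k) (hc : c ∈ C) (hwc : hammingNorm c + 2 = 2 * k) (hs : s ∈ C)
    (hsc : #(supp s \ supp c) = 1) : hammingNorm s = k := by
  obtain ⟨i, hi⟩ := card_pos.mp (hsc ▸ Nat.one_pos)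
  obtain ⟨hsi, hci⟩ := mem_sdiff.mp hi
  rw [mem_supp] at hsi
  rw [mem_supp, not_not] at hci
  have hs0 : s ≠ 0 := fun h => hsi (by simp [h])
  have hsc0 : s + c ≠ 0 := fun h => hsi (by simpa [hci] using congr_fun h i)
  have := hmin.finrank_le_hammingNorm hs hs0
  have := hmin.finrank_le_hammingNorm (C.add_mem hs hc) hsc0
  have := hammingNorm_add_add_two_mul_card_inter s c
  have := card_inter_add_card_sdiff (supp s) (supp c)
  rw [hammingNorm_eq_card_supp s] at *
  omega

theorem exists_hammingNorm_eq_finrank (hmin : IsMinimalCode C) (hk : 2 ≤ k)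
    (hdim : finrank (ZMod 2) C = k) (hn : n = 3 * (k - 1)) : ∃ s ∈ C, hammingNorm s = k := by
  obtain ⟨v, hv, hv0⟩ := Submodule.exists_mem_ne_zero_of_ne_bot (p := C) <| by
    rintro rfl
    simp at hdim
    omega
  obtain ⟨c, hc, hmax⟩ := exists_forall_hammingNorm_le C
  have hc0 : c ≠ 0 := by
    rintro rfl
    exact hv0 (by simpa using hmax v hv)
  have hwc : hammingNorm c + 2 = 2 * k := by
    have := hmin.two_mul_finrank_le_hammingNorm_add_two hc hmax
    have := hmin.hammingNorm_add_finrank_le hc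
    omega
  have hT : #(supp c)ᶜ = k - 1 := by
    rw [card_compl, Fintype.card_fin, ← hammingNorm_eq_card_supp]
    omega
  have htop : LinearMap.range (restrict C (supp c)ᶜ) = ⊤ := by
    refine Submodule.eq_top_of_finrank_eq (le_antisymm (Submodule.finrank_le _) ?_)
    have := hmin.finrank_le_finrank_range_restrict_add_one hc
    simp only [finrank_fintype_fun_eq_card, Fintype.card_coe, hT]
    omega
  obtain ⟨j, hj⟩ := card_pos.mp (show 0 < #(supp c)ᶜ by omega)
  obtain ⟨s, hs⟩ := LinearMap.mem_range.mp
    (htop ▸ Submodule.mem_top (x := Pi.single (⟨j, hj⟩ : ↥(supp c)ᶜ) (1 : ZMod 2)))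
  refine ⟨s, s.2, hmin.hammingNorm_eq_of_card_sdiff_eq_one hdim hc hwc s.2 ?_⟩
  rw [sdiff_eq_inter_compl, ← hammingNorm_restrict, hs]
  simp [hammingNorm, Pi.single_apply, filter_eq']

theorem hammingNorm_eq_of_supp_inter_eq_singleton (hmin : IsMinimalCode C)
    (hdim : finrank (ZMod 2) C = k) (hn : n = 3 * (k - 1)) (hs : s ∈ C)
    (hws : hammingNorm s = k) (hv : v ∈ C) {t : Fin n} (hsv : supp s ∩ supp v = {t}) :
    hammingNorm v = k := by
  have hv0 : v ≠ 0 := by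
    rintro rfl
    simp [supp] at hsv
  have := hmin.finrank_le_hammingNorm hv hv0
  have : 0 < k := hws ▸ card_pos.mpr ⟨t, (mem_inter.mp (hsv ▸ mem_singleton_self t)).1⟩
  have hsum := hammingNorm_add_add_two_mul_card_inter s v
  rw [hsv, card_singleton] at hsum
  have := hmin.hammingNorm_add_finrank_le (C.add_mem hs hv)
  omega

end Binary

end IsMinimalCode

open LinearCode in
/-- A binary minimal code of length `3(k-1)` and dimension `k ≥ 3` is
equivalent, via a permutation of coordinates, to a code with generator matrix
`G = (I_k | P)` in which every row of `G` has Hamming weight `k` (i.e. every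
row of `P` has weight `k-1`) and every column of `P` has even weight;
moreover the minimum distance of the code is `k`. -/
theorem structure_of_short_binary_minimal {k : ℕ} (hk : 3 ≤ k)
    (C : Submodule (ZMod 2) (Fin (3 * (k - 1)) → ZMod 2))
    (hdim : Module.finrank (ZMod 2) C = k) (hmin : IsMinimalCode C) :
    (∃ π : Equiv.Perm (Fin (3 * (k - 1))),
      ∃ G : Matrix (Fin k) (Fin (3 * (k - 1))) (ZMod 2),
        (∀ (i : Fin k) (j : Fin (3 * (k - 1))), (j : ℕ) < k →
          G i j = if (i : ℕ) = (j : ℕ) then 1 else 0) ∧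
        (∀ i : Fin k, hammingNorm (G i) = k) ∧
        (∀ j : Fin (3 * (k - 1)), k ≤ (j : ℕ) →
          Even (Finset.univ.filter (fun i : Fin k => G i j ≠ 0)).card) ∧
        Submodule.map (LinearMap.funLeft (ZMod 2) (ZMod 2) π) C =
          LinearMap.range G.vecMulLinear) ∧
    IsLeast {w | ∃ c ∈ C, c ≠ 0 ∧ hammingNorm c = w} k := by
  obtain ⟨s, hs, hws⟩ := hmin.exists_hammingNorm_eq_finrank (by omega) hdim rfl
  have hs0 : s ≠ 0 := hammingNorm_pos_iff.mp (by omega)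
  have hbij := hmin.bijective_restrict_supp hs hs0 (hws.trans hdim.symm)
  set b := basisOfBijectiveRestrict hbij
  obtain ⟨π, σ, hπ_lt, hπ_ge⟩ := exists_perm_initial_segment (supp s) hws
  refine ⟨⟨π, Matrix.of fun i j => (b (σ i) : Fin (3 * (k - 1)) → ZMod 2) (π j), fun i j hj => ?_,
    fun i => ?_, fun j hj => ?_, ?_⟩, ?_, ?_⟩
  · simp [hπ_lt j hj, b, basisOfBijectiveRestrict_apply_of_mem, Fin.ext_iff, eq_comm]
  · exact (hammingNorm_comp_equiv _ π).trans (hmin.hammingNorm_eq_of_supp_inter_eq_singleton hdim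
      rfl hs hws (b (σ i)).2 (inter_supp_basisOfBijectiveRestrict hbij (σ i)))
  · have hsT : ∀ i ∈ supp s, s i = 1 := fun i hi => Fin.eq_one_of_ne_zero _ (mem_supp.mp hi)
    rw [← ZMod.natCast_eq_zero_iff_even, natCast_card_filter_ne_zero]
    change ∑ i, (b (σ i) : Fin _ → ZMod 2) (π j) = 0
    rw [σ.sum_comp (fun t => (b t : Fin _ → ZMod 2) (π j)), ← Finset.sum_apply,
      sum_basisOfBijectiveRestrict hbij hs hsT]
    simpa [mem_supp] using hπ_ge j hj
  · exact map_funLeft_eq_range_vecMulLinear C b σ π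
  · exact ⟨s, hs, hs0, hws⟩
  · rintro w ⟨c, hc, hc0, rfl⟩
    exact hdim.symm.le.trans (hmin.finrank_le_hammingNorm hc hc0)
end

section
/- With ε(q) defined implicitly by the equality ((q-1)/q) · C(q) · log_q((e/C(q)) · q · (q+ε(q))) = 1 where C(q) = ε(q) + 2 - 2√(ε(q)+1), one has lim_{q→∞} ε(q) = √2 + 1/2. -/
open Real Filter

/-- If `ε(q) ∈ (1,2)` is defined implicitly by the equation
`((q-1)/q)·C(q)·log_q((e/C(q))·q·(q+ε(q))) = 1` with
`C(q) = ε(q) + 2 - 2√(ε(q)+1)`, then `ε(q) → √2 + 1/2` as `q → ∞`. -/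
theorem epsilon_tendsto (ε : ℝ → ℝ)
    (hrange : ∀ q : ℝ, 2 ≤ q → ε q ∈ Set.Ioo (1 : ℝ) 2)
    (heq : ∀ q : ℝ, 2 ≤ q →
      ((q - 1) / q) * (ε q + 2 - 2 * Real.sqrt (ε q + 1)) *
          Real.logb q
            ((Real.exp 1 / (ε q + 2 - 2 * Real.sqrt (ε q + 1))) * q * (q + ε q)) = 1) :
    Filter.Tendsto ε Filter.atTop (nhds (Real.sqrt 2 + 1 / 2)) := by
  set C : ℝ → ℝ := fun q => ε q + 2 - 2 * Real.sqrt (ε q + 1) with hCdef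
  set B : ℝ → ℝ := fun q => 1 - Real.log (C q) + Real.log (1 + ε q / q) with hBdef
  -- pointwise facts for q ≥ 2
  have basic : ∀ q : ℝ, 2 ≤ q →
      (1/8 : ℝ) < C q ∧ C q < 1 ∧ 0 < B q ∧ B q ≤ 5 := by
    intro q hq
    obtain ⟨he1, he2⟩ := hrange q hq
    set s := Real.sqrt (ε q + 1) with hs
    have hs0 : 0 ≤ s := Real.sqrt_nonneg _
    have hs2 : s ^ 2 = ε q + 1 := Real.sq_sqrt (by linarith)
    have hs1 : 1 < s := by nlinarith
    have hslt : s < 2 := by nlinarith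
    have hC8 : (1/8 : ℝ) < C q := by
      simp only [hCdef]
      nlinarith [sq_nonneg (s - 1.4), sq_nonneg (s - 1.5)]
    have hC1 : C q < 1 := by
      simp only [hCdef]; nlinarith
    have hq0 : (0:ℝ) < q := by linarith
    have heq0 : 0 < ε q / q := by positivity
    have heq1 : ε q / q < 1 := by
      rw [div_lt_one hq0]; linarith
    have hlogC_neg : Real.log (C q) < 0 := Real.log_neg (lt_trans (by norm_num) hC8) hC1
    have hlogC_lb : -Real.log 8 < Real.log (C q) := by
      have := Real.log_lt_log (by norm_num : (0:ℝ) < 1/8) hC8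
      rwa [show (1/8 : ℝ) = 8⁻¹ by norm_num, Real.log_inv] at this
    have hlog8 : Real.log 8 < 3 := by
      have h2 : Real.log 2 < 0.6931471808 := Real.log_two_lt_d9
      have : Real.log 8 = 3 * Real.log 2 := by
        rw [show (8:ℝ) = 2 ^ (3:ℕ) by norm_num, Real.log_pow]; push_cast; ring
      linarith
    have hlog1e_pos : 0 < Real.log (1 + ε q / q) := Real.log_pos (by linarith)
    have hlog1e_lt : Real.log (1 + ε q / q) < 1 := by
      have hexp : (2.7182818283 : ℝ) < Real.exp 1 := Real.exp_one_gt_d9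
      have := Real.log_lt_log (by linarith : (0:ℝ) < 1 + ε q / q)
        (by linarith : 1 + ε q / q < Real.exp 1)
      · rwa [Real.log_exp] at this
    refine ⟨hC8, hC1, ?_, ?_⟩
    · simp only [hBdef]; linarith
    · simp only [hBdef]; linarith
  have key : ∀ q : ℝ, 2 ≤ q →
      C q = 1 / ((q - 1) / q * (2 + B q / Real.log q)) ∧
      ε q = C q + 2 * Real.sqrt (C q) := by
    intro q hq
    obtain ⟨he1, he2⟩ := hrange q hq
    obtain ⟨hC8, hC1, hB0, hB5⟩ := basic q hq
    have hC0 : (0:ℝ) < C q := lt_trans (by norm_num) hC8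
    have hq0 : (0:ℝ) < q := by linarith
    have hq1 : (1:ℝ) < q := by linarith
    have hlogq : 0 < Real.log q := Real.log_pos hq1
    have hqe : (0:ℝ) < q + ε q := by linarith
    -- rewrite the log of the big product
    have hX : Real.log ((Real.exp 1 / C q) * q * (q + ε q))
        = 2 * Real.log q + B q := by
      have h1 : q + ε q = q * (1 + ε q / q) := by field_simp
      rw [Real.log_mul (by positivity) (by positivity),
          Real.log_mul (by positivity) (by positivity),
          Real.log_div (by positivity) (by positivity), Real.log_exp,
          h1, Real.log_mul (by positivity) (by positivity)]
      simp only [hBdef]; ring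
    have hmain : (q - 1) / q * C q * (2 * Real.log q + B q) = Real.log q := by
      have h := heq q hq
      rw [Real.logb, hX] at h
      field_simp at h
      simp only [hCdef]
      field_simp
      linear_combination h
    -- divide by log q
    have hD : (q - 1) / q * (2 + B q / Real.log q) * Real.log q
        = (q - 1) / q * (2 * Real.log q + B q) := by
      field_simp
    have hCD : C q * ((q - 1) / q * (2 + B q / Real.log q)) = 1 := by
      have h2 : C q * ((q - 1) / q * (2 + B q / Real.log q)) * Real.log q
          = Real.log q := by rw [mul_assoc, hD]; linarith [hmain]
      have := mul_right_cancel₀ (ne_of_gt hlogq) (h2.trans (one_mul (Real.log q)).symm)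
      linarith [this]
    constructor
    · exact eq_one_div_of_mul_eq_one_left hCD
    · -- ε q = C q + 2 √(C q)
      set s := Real.sqrt (ε q + 1) with hs
      have hs0 : 0 ≤ s := Real.sqrt_nonneg _
      have hs2 : s ^ 2 = ε q + 1 := Real.sq_sqrt (by linarith)
      have hs1 : 1 < s := by nlinarith
      have hCsq : C q = (s - 1) ^ 2 := by
        simp only [hCdef]; rw [← hs]; linear_combination -hs2
      have hsC : Real.sqrt (C q) = s - 1 := by
        rw [hCsq]; exact Real.sqrt_sq (by linarith)
      rw [hsC, hCsq]; linear_combination -hs2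
  -- B q / log q → 0
  have hBlog : Tendsto (fun q => B q / Real.log q) atTop (nhds 0) := by
    apply squeeze_zero_norm' (a := fun q => 5 / Real.log q)
    · filter_upwards [eventually_ge_atTop (2:ℝ)] with q hq
      obtain ⟨_, _, hB0, hB5⟩ := basic q hq
      have hlogq : 0 < Real.log q := Real.log_pos (by linarith)
      rw [Real.norm_eq_abs, abs_div, abs_of_pos hB0, abs_of_pos hlogq]
      gcongr
    · exact tendsto_const_nhds.div_atTop Real.tendsto_log_atTop
  -- (q-1)/q → 1
  have hfrac : Tendsto (fun q : ℝ => (q - 1) / q) atTop (nhds 1) := by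
    have h1 : Tendsto (fun q : ℝ => 1 - q⁻¹) atTop (nhds 1) := by
      simpa using (tendsto_const_nhds (x := (1:ℝ))).sub tendsto_inv_atTop_zero
    apply h1.congr'
    filter_upwards [eventually_gt_atTop (0:ℝ)] with q hq
    field_simp
  -- C → 1/2
  have hden : Tendsto (fun q => (q - 1) / q * (2 + B q / Real.log q)) atTop (nhds 2) := by
    have := hfrac.mul ((tendsto_const_nhds (x := (2:ℝ))).add hBlog)
    norm_num at this
    simpa using this
  have hCt : Tendsto C atTop (nhds (1/2)) := by
    have hg : Tendsto (fun q => 1 / ((q - 1) / q * (2 + B q / Real.log q))) atTop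
        (nhds (1/2)) := by
      have := hden.inv₀ (by norm_num : (2:ℝ) ≠ 0)
      simpa [one_div] using this
    apply hg.congr'
    filter_upwards [eventually_ge_atTop (2:ℝ)] with q hq
    exact ((key q hq).1).symm
  -- conclude
  have hsq : Tendsto (fun q => C q + 2 * Real.sqrt (C q)) atTop
      (nhds (1/2 + 2 * Real.sqrt (1/2))) :=
    hCt.add (((Real.continuous_sqrt.tendsto (1/2)).comp hCt).const_mul 2)
  have heps : (fun q => C q + 2 * Real.sqrt (C q)) =ᶠ[atTop] ε := by
    filter_upwards [eventually_ge_atTop (2:ℝ)] with q hq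
    exact ((key q hq).2).symm
  have hfin := Filter.Tendsto.congr' heps hsq
  have hhalf : Real.sqrt (1/2) = Real.sqrt 2 / 2 := by
    rw [show (1/2:ℝ) = (Real.sqrt 2 / 2)^2 by
      rw [div_pow, Real.sq_sqrt] <;> norm_num]
    exact Real.sqrt_sq (by positivity)
  have hpt : (1:ℝ)/2 + 2 * Real.sqrt (1/2) = Real.sqrt 2 + 1/2 := by
    rw [hhalf]; ring
  rwa [hpt] at hfin
end
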